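/- Let (Ω, P) be a probability space, let M ≥ 1, and let X_1, …, X_M be independent random variables each taking values in {−1, 1}. Set p̄ = (1/M)·∑_{m=1}^{M} P(X_m = 1). If p̄ < 1/2, then P(∑_{m=1}^{M} X_m ≥ 0) ≤ (4·p̄·(1 − p̄))^{M/2}. -/

import Mathlib

/-!
For `t ≥ 0`, Markov's inequality applied to `exp (t ∑ X_m)` and independence bound
`P(∑ X_m ≥ 0)` by `∏ (p_m e^t + (1 - p_m) e^{-t})`, and AM-GM bounds this product by
`(p̄ e^t + (1 - p̄) e^{-t})^M`. When `p̄ > 0`, the choice `e^{2t} = (1 - p̄) / p̄`, admissible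
because `p̄ < 1/2`, turns the base into `√(4 p̄ (1 - p̄))`; when `p̄ = 0`, let `t → ∞`.
-/

open MeasureTheory ProbabilityTheory Real Finset Filter Topology

theorem Real.prod_le_arith_mean_pow {ι : Type*} (s : Finset ι) {z : ι → ℝ}
    (hz : ∀ i ∈ s, 0 ≤ z i) : ∏ i ∈ s, z i ≤ ((∑ i ∈ s, z i) / #s) ^ #s := by
  rcases s.eq_empty_or_nonempty with rfl | hs
  · simp
  have hgm := geom_mean_le_arith_mean s (fun _ => 1) z (fun _ _ => zero_le_one)
    (by simpa using hs.card_pos) hz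
  simp only [rpow_one, one_mul, sum_const, nsmul_eq_mul, mul_one] at hgm
  calc ∏ i ∈ s, z i = ((∏ i ∈ s, z i) ^ (#s : ℝ)⁻¹) ^ #s :=
        (rpow_inv_natCast_pow (prod_nonneg hz) hs.card_pos.ne').symm
    _ ≤ ((∑ i ∈ s, z i) / #s) ^ #s := by gcongr; exact rpow_nonneg (prod_nonneg hz) _

theorem Real.prod_convex_comb_le_pow {ι : Type*} (s : Finset ι) {p : ι → ℝ}
    (hp₀ : ∀ i ∈ s, 0 ≤ p i) (hp₁ : ∀ i ∈ s, p i ≤ 1) {a b : ℝ} (ha : 0 ≤ a) (hb : 0 ≤ b) :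
    ∏ i ∈ s, (p i * a + (1 - p i) * b)
      ≤ ((∑ i ∈ s, p i) / #s * a + (1 - (∑ i ∈ s, p i) / #s) * b) ^ #s := by
  rcases s.eq_empty_or_nonempty with rfl | hs
  · simp
  have hcard : (#s : ℝ) ≠ 0 := by exact_mod_cast hs.card_pos.ne'
  have hmean : (∑ i ∈ s, (p i * a + (1 - p i) * b)) / #s
      = (∑ i ∈ s, p i) / #s * a + (1 - (∑ i ∈ s, p i) / #s) * b := by
    simp only [sum_add_distrib, ← sum_mul, sum_sub_distrib, sum_const, nsmul_eq_mul, mul_one]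
    field_simp
  rw [← hmean]
  exact prod_le_arith_mean_pow s fun i hi =>
    add_nonneg (mul_nonneg (hp₀ i hi) ha) (mul_nonneg (sub_nonneg.2 (hp₁ i hi)) hb)

theorem Real.exists_exp_mul_add_exp_neg_eq_sqrt {p q : ℝ} (hp : 0 < p) (hpq : p ≤ q) :
    ∃ t, 0 ≤ t ∧ p * exp t + q * exp (-t) = √(4 * p * q) := by
  have hq : 0 < q := hp.trans_le hpq
  have hsp : 0 < √p := sqrt_pos.2 hp
  have hsq : 0 < √q := sqrt_pos.2 hq
  have h4pq : 4 * p * q = (2 * √p * √q) ^ 2 := by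
    rw [mul_pow, mul_pow, sq_sqrt hp.le, sq_sqrt hq.le]; ring
  refine ⟨log √q - log √p, sub_nonneg.2 (log_le_log hsp (sqrt_le_sqrt hpq)), ?_⟩
  rw [h4pq, sqrt_sq (by positivity), neg_sub, exp_sub, exp_sub, exp_log hsp, exp_log hsq]
  field_simp
  rw [sq_sqrt hp.le, sq_sqrt hq.le]
  ring

theorem Real.le_sqrt_pow_of_forall_le_exp_mul_add_exp_neg {p q x : ℝ} (n : ℕ) (hp : 0 ≤ p)
    (hpq : p ≤ q) (h : ∀ t, 0 ≤ t → x ≤ (p * exp t + q * exp (-t)) ^ n) :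
    x ≤ √(4 * p * q) ^ n := by
  rcases hp.eq_or_lt with rfl | hp
  · have hlim : Tendsto (fun t => (0 * exp t + q * exp (-t)) ^ n) atTop (𝓝 ((q * 0) ^ n)) := by
      simpa using (tendsto_exp_neg_atTop_nhds_zero.const_mul q).pow n
    simpa using ge_of_tendsto hlim (eventually_atTop.2 ⟨0, h⟩)
  · obtain ⟨t, ht, hopt⟩ := exists_exp_mul_add_exp_neg_eq_sqrt hp hpq
    exact hopt ▸ h t ht

theorem Real.exp_mul_eq_indicator_add_of_pm_one {α : Type*} {X : α → ℝ}
    (hval : ∀ ω, X ω = 1 ∨ X ω = -1) (t : ℝ) :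
    (fun ω => exp (t * X ω))
      = {ω | X ω = 1}.indicator (fun _ => exp t - exp (-t)) + fun _ => exp (-t) := by
  ext ω
  rcases hval ω with h | h
  · simp [Set.indicator, h]
  · simp [Set.indicator, h, show (-1 : ℝ) ≠ 1 by norm_num]

namespace ProbabilityTheory

variable {Ω : Type*} [MeasurableSpace Ω] {P : Measure Ω} {X : Ω → ℝ}

theorem integrable_exp_mul_of_pm_one [IsFiniteMeasure P] (hX : Measurable X)
    (hval : ∀ ω, X ω = 1 ∨ X ω = -1) (t : ℝ) : Integrable (fun ω => exp (t * X ω)) P := by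
  rw [exp_mul_eq_indicator_add_of_pm_one hval]
  exact ((integrable_const _).indicator (hX (measurableSet_singleton 1))).add (integrable_const _)

theorem mgf_of_pm_one [IsProbabilityMeasure P] (hX : Measurable X)
    (hval : ∀ ω, X ω = 1 ∨ X ω = -1) (t : ℝ) :
    mgf X P t = P.real {ω | X ω = 1} * exp t + (1 - P.real {ω | X ω = 1}) * exp (-t) := by
  have hA : MeasurableSet {ω | X ω = 1} := hX (measurableSet_singleton 1)
  rw [mgf, exp_mul_eq_indicator_add_of_pm_one hval, integral_add'
    ((integrable_const _).indicator hA) (integrable_const _), integral_indicator_const _ hA,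
    integral_const, probReal_univ]
  simp only [smul_eq_mul]
  ring

theorem measure_sum_ge_le_exp_mul_prod_mgf {ι : Type*} [Fintype ι] [IsFiniteMeasure P]
    {X : ι → Ω → ℝ} (hmeas : ∀ i, Measurable (X i)) (hindep : iIndepFun X P) (ε : ℝ) {t : ℝ}
    (ht : 0 ≤ t) (hint : ∀ i, Integrable (fun ω => exp (t * X i ω)) P) :
    P.real {ω | ε ≤ ∑ i, X i ω} ≤ exp (-t * ε) * ∏ i, mgf (X i) P t := by
  rw [← hindep.mgf_sum hmeas]
  simpa [Finset.sum_apply] using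
    measure_ge_le_exp_mul_mgf ε ht (hindep.integrable_exp_mul_sum hmeas fun i _ => hint i)

theorem measure_sum_nonneg_le_of_pm_one {ι : Type*} [Fintype ι] [IsProbabilityMeasure P]
    {X : ι → Ω → ℝ} (hmeas : ∀ i, Measurable (X i)) (hindep : iIndepFun X P)
    (hval : ∀ i ω, X i ω = 1 ∨ X i ω = -1) {t : ℝ} (ht : 0 ≤ t) :
    P.real {ω | 0 ≤ ∑ i, X i ω}
      ≤ ((∑ i, P.real {ω | X i ω = 1}) / Fintype.card ι * exp t
        + (1 - (∑ i, P.real {ω | X i ω = 1}) / Fintype.card ι) * exp (-t)) ^ Fintype.card ι := by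
  calc P.real {ω | 0 ≤ ∑ i, X i ω} ≤ ∏ i, mgf (X i) P t := by
        simpa using measure_sum_ge_le_exp_mul_prod_mgf hmeas hindep 0 ht
          fun i => integrable_exp_mul_of_pm_one (hmeas i) (hval i) t
    _ = ∏ i, (P.real {ω | X i ω = 1} * exp t + (1 - P.real {ω | X i ω = 1}) * exp (-t)) :=
        prod_congr rfl fun i _ => mgf_of_pm_one (hmeas i) (hval i) t
    _ ≤ _ := prod_convex_comb_le_pow univ (fun _ _ => measureReal_nonneg)
        (fun _ _ => measureReal_le_one) (exp_pos t).le (exp_pos (-t)).le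

end ProbabilityTheory

theorem stmt_0 {Ω : Type*} [MeasurableSpace Ω] (P : Measure Ω) [IsProbabilityMeasure P]
    (M : ℕ)
    (X : Fin M → Ω → ℝ)
    (hmeas : ∀ m, Measurable (X m))
    (hindep : iIndepFun X P)
    (hval : ∀ m ω, X m ω = 1 ∨ X m ω = -1)
    (pbar : ℝ)
    (hpbar : pbar = (1 / M) * ∑ m, (P {ω | X m ω = 1}).toReal)
    (hlt : pbar < 1 / 2) :
    (P {ω | 0 ≤ ∑ m, X m ω}).toReal ≤ (4 * pbar * (1 - pbar)) ^ ((M : ℝ) / 2) := by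
  have hpbar' : pbar = (∑ m, P.real {ω | X m ω = 1}) / Fintype.card (Fin M) := by
    rw [hpbar, Fintype.card_fin, one_div_mul_eq_div]; rfl
  have hpbar₀ : 0 ≤ pbar := by rw [hpbar']; positivity
  rw [rpow_div_two_eq_sqrt _ (by nlinarith), rpow_natCast]
  refine le_sqrt_pow_of_forall_le_exp_mul_add_exp_neg M hpbar₀ (by linarith) fun t ht => ?_
  rw [← measureReal_def, hpbar']
  simpa only [Fintype.card_fin] using measure_sum_nonneg_le_of_pm_one hmeas hindep hval ht
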